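/- Let H be a connected graph with at least two vertices, let w ∈ V(H), and let m_1, m_2 ≥ 3. Let G be the graph obtained from H, the cycle C_{m_1} and the cycle C_{m_2} by identifying the vertex w, a vertex of C_{m_1} and a vertex of C_{m_2} into a single vertex. Let G' be the graph obtained from H and the cycle C_{m_1+m_2−1} by identifying w with a vertex of C_{m_1+m_2−1}. Then ε(G') ≥ ε(G). -/

import Mathlib

open SimpleGraph

/-- The eccentricity of a vertex: maximum distance to any vertex. -/
noncomputable def ecc {V : Type*} (G : SimpleGraph V) (v : V) : ℕ :=
  ⨆ u, G.dist v u

/-- The total eccentricity index: sum of eccentricities of all vertices. -/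
noncomputable def totalEcc {V : Type*} [Fintype V] (G : SimpleGraph V) : ℕ :=
  ∑ v, ecc G v

/-- A pendant vertex: a vertex of degree one, i.e. with exactly one neighbour. -/
def IsPendant {V : Type*} (G : SimpleGraph V) (v : V) : Prop :=
  ∃! u, G.Adj v u

/-- A cut vertex: a vertex whose removal disconnects the graph. -/
def IsCutVertex {V : Type*} (G : SimpleGraph V) (w : V) : Prop :=
  ¬ (G.induce {v | v ≠ w}).Connected

/-- distance between two subgraphs -/
noncomputable def subgraphDist {V : Type*} (G : SimpleGraph V) (B B' : G.Subgraph) : ℕ :=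
  sInf {d | ∃ u ∈ B.verts, ∃ w ∈ B'.verts, G.dist u w = d}

/-- A 2-connected subgraph: at least two vertices, connected, and no cut vertex. -/
def TwoConn {V : Type*} {G : SimpleGraph V} (H : G.Subgraph) : Prop :=
  2 ≤ H.verts.ncard ∧ H.coe.Connected ∧ ∀ w, ¬ IsCutVertex H.coe w

/-- A block: a maximal 2-connected subgraph. -/
def IsBlock {V : Type*} {G : SimpleGraph V} (H : G.Subgraph) : Prop :=
  TwoConn H ∧ ∀ H' : G.Subgraph, H ≤ H' → TwoConn H' → H' = H

/-- A pendant block: a block containing exactly one cut vertex of `G`. -/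
def IsPendantBlock {V : Type*} (G : SimpleGraph V) (H : G.Subgraph) : Prop :=
  ∃! w, w ∈ H.verts ∧ IsCutVertex G w

/-- `G_{k,l}`: the graph obtained from `G` by attaching two new paths,
with `k` resp. `l` new vertices, at the vertex `v`. -/
def attachTwoPaths {V : Type*} (G : SimpleGraph V) (v : V) (k l : ℕ) :
    SimpleGraph (V ⊕ (Fin k ⊕ Fin l)) :=
  SimpleGraph.fromRel (fun p q =>
    match p, q with
    | .inl x, .inl y => G.Adj x y
    | .inl x, .inr (.inl i) => x = v ∧ i.val = 0
    | .inl x, .inr (.inr i) => x = v ∧ i.val = 0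
    | .inr (.inl i), .inr (.inl j) => i.val + 1 = j.val
    | .inr (.inr i), .inr (.inr j) => i.val + 1 = j.val
    | _, _ => False)

/-- The graph obtained from `H1`, `H2` and the path `P_d = v_1 v_2 … v_d` by identifying
`u ∈ V(H1)`, `v ∈ V(H2)` and `v_1` into a single vertex.  The `Fin (d-1)` part records the
path vertices `v_2, …, v_d`. -/
def glueMid {V1 V2 : Type*} (H1 : SimpleGraph V1) (H2 : SimpleGraph V2)
    (u : V1) (v : V2) (d : ℕ) :
    SimpleGraph (V1 ⊕ ({x : V2 // x ≠ v} ⊕ Fin (d - 1))) :=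
  SimpleGraph.fromRel (fun p q =>
    match p, q with
    | .inl x, .inl y => H1.Adj x y
    | .inl x, .inr (.inl y) => x = u ∧ H2.Adj v y.1
    | .inl x, .inr (.inr i) => x = u ∧ i.val = 0
    | .inr (.inl x), .inr (.inl y) => H2.Adj x.1 y.1
    | .inr (.inr i), .inr (.inr j) => i.val + 1 = j.val
    | _, _ => False)

/-- The graph obtained from `H1`, `H2` and the path `P_d = v_1 v_2 … v_d` by identifying
`u ∈ V(H1)` with `v_1` and `v ∈ V(H2)` with `v_d`.  The `Fin (d-1)` part records the path
vertices `v_2, …, v_d` (the last one being identified with `v`). -/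
def glueEnds {V1 V2 : Type*} (H1 : SimpleGraph V1) (H2 : SimpleGraph V2)
    (u : V1) (v : V2) (d : ℕ) :
    SimpleGraph (V1 ⊕ ({x : V2 // x ≠ v} ⊕ Fin (d - 1))) :=
  SimpleGraph.fromRel (fun p q =>
    match p, q with
    | .inl x, .inl y => H1.Adj x y
    | .inl x, .inr (.inr i) => x = u ∧ i.val = 0
    | .inr (.inl x), .inr (.inl y) => H2.Adj x.1 y.1
    | .inr (.inr i), .inr (.inl y) => i.val + 1 = d - 1 ∧ H2.Adj v y.1
    | .inr (.inr i), .inr (.inr j) => i.val + 1 = j.val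
    | _, _ => False)

/-- `U_{n,g}^l`: the unicyclic graph on `n` vertices obtained by joining one end vertex of
the path `P_{n-g}` to a vertex of the cycle `C_g` by an edge. -/
def UnlGraph (n g : ℕ) : SimpleGraph (Fin (n - g) ⊕ Fin g) :=
  SimpleGraph.fromRel (fun p q =>
    match p, q with
    | .inl i, .inl j => i.val + 1 = j.val
    | .inl i, .inr j => i.val + 1 = n - g ∧ j.val = 0
    | .inr i, .inr j => i.val + 1 = j.val ∨ (i.val = 0 ∧ j.val + 1 = g)
    | _, _ => False)

/-- `U_{n,g}^p`: the unicyclic graph on `n` vertices obtained by attaching `n - g` pendant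
vertices to one vertex of the cycle `C_g`. -/
def UnpGraph (n g : ℕ) : SimpleGraph (Fin g ⊕ Fin (n - g)) :=
  SimpleGraph.fromRel (fun p q =>
    match p, q with
    | .inl i, .inl j => i.val + 1 = j.val ∨ (i.val = 0 ∧ j.val + 1 = g)
    | .inl i, .inr _ => i.val = 0
    | _, _ => False)

/-- The graph obtained by joining the vertex `u` of `H` to the pendant vertex of
`U_{r,g}^l` by an edge. -/
def joinPendant {V : Type*} (H : SimpleGraph V) (u : V) (r g : ℕ) :
    SimpleGraph (V ⊕ (Fin (r - g) ⊕ Fin g)) :=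
  SimpleGraph.fromRel (fun p q =>
    match p, q with
    | .inl x, .inl y => H.Adj x y
    | .inl x, .inr (.inl i) => x = u ∧ i.val = 0
    | .inr a, .inr b => (UnlGraph r g).Adj a b
    | _, _ => False)

/-- `C_{m1,m2}^n` in the case `n = m1 + m2 - 1`: two cycles `C_{m1}` and `C_{m2}`
sharing exactly one vertex (the vertex `0`). -/
def twoCyclesGlued (m1 m2 : ℕ) : SimpleGraph (Fin (m1 + m2 - 1)) :=
  SimpleGraph.fromRel (fun i j =>
    (i.val + 1 = j.val ∧ j.val < m1) ∨ (i.val = 0 ∧ j.val + 1 = m1)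
    ∨ (i.val = 0 ∧ j.val = m1) ∨ (m1 ≤ i.val ∧ i.val + 1 = j.val)
    ∨ (i.val = 0 ∧ j.val + 2 = m1 + m2))

/-- `C_{3,3}^n` for `n > 5`: two triangles `{0,1,2}` and `{n-3,n-2,n-1}` joined by the path
`2, 3, …, n-3` (a path on `n - 4` vertices whose ends are identified with a vertex of each
triangle). -/
def C33 (n : ℕ) : SimpleGraph (Fin n) :=
  SimpleGraph.fromRel (fun i j =>
    (i.val = 0 ∧ j.val = 1) ∨ (i.val = 0 ∧ j.val = 2) ∨ (i.val = 1 ∧ j.val = 2)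
    ∨ (2 ≤ i.val ∧ i.val + 1 = j.val ∧ j.val + 3 ≤ n)
    ∨ (i.val + 3 = n ∧ j.val + 2 = n) ∨ (i.val + 2 = n ∧ j.val + 1 = n)
    ∨ (i.val + 3 = n ∧ j.val + 1 = n))

/-- `T(l, m, d)`: the tree obtained from the path `P_d` by attaching `l` pendant vertices at
one end and `m` pendant vertices at the other end. -/
def Tlmd (l m d : ℕ) : SimpleGraph (Fin d ⊕ (Fin l ⊕ Fin m)) :=
  SimpleGraph.fromRel (fun p q =>
    match p, q with
    | .inl i, .inl j => i.val + 1 = j.val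
    | .inl i, .inr (.inl _) => i.val = 0
    | .inl i, .inr (.inr _) => i.val + 1 = d
    | _, _ => False)

/-- `K_m^n(l_1, …, l_m)`: the graph obtained from the complete graph `K_m` by identifying,
for each `i`, one end vertex of a path on `l i` vertices with the `i`-th vertex of `K_m`.
The vertex `⟨i, 0⟩` is the `i`-th vertex of the complete graph. -/
def Kmn (m : ℕ) (l : Fin m → ℕ) : SimpleGraph ((i : Fin m) × Fin (l i)) :=
  SimpleGraph.fromRel (fun p q =>
    (p.1 = q.1 ∧ p.2.val + 1 = q.2.val) ∨ (p.1 ≠ q.1 ∧ p.2.val = 0 ∧ q.2.val = 0))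

/-- The graph obtained from `H`, `C_{m1}` and `C_{m2}` by identifying the vertex `w` of `H`,
a vertex of `C_{m1}` and a vertex of `C_{m2}` into one vertex. -/
def glueTwoCycles {V : Type*} (H : SimpleGraph V) (w : V) (m1 m2 : ℕ) :
    SimpleGraph (V ⊕ (Fin (m1 - 1) ⊕ Fin (m2 - 1))) :=
  SimpleGraph.fromRel (fun p q =>
    match p, q with
    | .inl x, .inl y => H.Adj x y
    | .inl x, .inr (.inl i) => x = w ∧ (i.val = 0 ∨ i.val + 2 = m1)
    | .inl x, .inr (.inr i) => x = w ∧ (i.val = 0 ∨ i.val + 2 = m2)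
    | .inr (.inl i), .inr (.inl j) => i.val + 1 = j.val
    | .inr (.inr i), .inr (.inr j) => i.val + 1 = j.val
    | _, _ => False)

/-- The graph obtained from `H` and the cycle `C_M` by identifying the vertex `w` of `H`
with one vertex of the cycle. -/
def glueOneCycle {V : Type*} (H : SimpleGraph V) (w : V) (M : ℕ) :
    SimpleGraph (V ⊕ Fin (M - 1)) :=
  SimpleGraph.fromRel (fun p q =>
    match p, q with
    | .inl x, .inl y => H.Adj x y
    | .inl x, .inr i => x = w ∧ (i.val = 0 ∨ i.val + 2 = M)
    | .inr i, .inr j => i.val + 1 = j.val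
    | _, _ => False)

/-!
Gluing `H` and a cycle `C_M` at `w`, the distance between two vertices is the distance of their
positions on the cycle plus the distance of their shadows in `H`. Hence a vertex of `G'` at depth
`b` on the cycle has eccentricity `max ⌊M/2⌋ (b + ecc_H w)`, and a vertex of `H` has eccentricity
`max (⌊M/2⌋ + d_H(v, w)) (ecc_H v)`. The graph `G` is covered by two such graphs meeting at `w`,
which bounds its eccentricities from above by the same kind of expressions. The vertices of `H`
then compare directly, because `⌊m_i/2⌋ ≤ ⌊M/2⌋`. The cycle vertices of `G` are matched
injectively with those of `C_{m1+m2-1}` so that depths never decrease and the antipodes of the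
two short cycles land in the middle of the long one; since `ecc_H w ≥ 1`, every cycle vertex of
`G` is then at most as eccentric as its partner.
-/

section Eccentricity

variable {W : Type*} {G : SimpleGraph W}

theorem dist_le_ecc [Finite W] (v u : W) : G.dist v u ≤ ecc G v :=
  le_ciSup (Set.finite_range _).bddAbove u

theorem ecc_le_of_forall_dist_le {v : W} {k : ℕ} (h : ∀ u, G.dist v u ≤ k) : ecc G v ≤ k :=
  haveI : Nonempty W := ⟨v⟩
  ciSup_le h

theorem exists_dist_eq_ecc [Finite W] (v : W) : ∃ u, G.dist v u = ecc G v :=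
  haveI : Nonempty W := ⟨v⟩
  exists_eq_ciSup_of_finite

theorem one_le_ecc [Finite W] [Nontrivial W] (hG : G.Connected) (v : W) : 1 ≤ ecc G v := by
  obtain ⟨u, hu⟩ := exists_ne v
  exact (hG.pos_dist_of_ne hu.symm).trans_le (dist_le_ecc v u)

theorem SimpleGraph.Reachable.dist_map_le {α β : Type*} {A : SimpleGraph α} {B : SimpleGraph β}
    (f : A →g B) {x y : α} (h : A.Reachable x y) : B.dist (f x) (f y) ≤ A.dist x y := by
  obtain ⟨p, hp⟩ := h.exists_walk_length_eq_dist
  simpa [hp] using dist_le (p.map f)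

theorem SimpleGraph.Reachable.le_add_dist_of_lipschitz (f : W → ℕ)
    (hf : ∀ a b, G.Adj a b → f b ≤ f a + 1) {x y : W} (h : G.Reachable x y) :
    f y ≤ f x + G.dist x y := by
  obtain ⟨p, hp⟩ := h.exists_walk_length_eq_dist
  rw [← hp]
  clear hp h
  induction p with
  | nil => simp
  | cons hadj p ih =>
    have := hf _ _ hadj
    rw [Walk.length_cons]
    omega

theorem SimpleGraph.exists_walk_length_eq_of_adj_succ (f : ℕ → W) {a b : ℕ} (hab : a ≤ b)
    (h : ∀ k, a ≤ k → k < b → G.Adj (f k) (f (k + 1))) :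
    ∃ p : G.Walk (f a) (f b), p.length = b - a := by
  induction b, hab using Nat.le_induction with
  | base => exact ⟨.nil, by simp⟩
  | succ b hab ih =>
    obtain ⟨p, hp⟩ := ih fun k hk hkb => h k hk (by omega)
    exact ⟨p.concat (h b hab (by omega)), by rw [Walk.length_concat, hp]; omega⟩

theorem ecc_map_le_of_cover {α β : Type*} [Finite α] {A : SimpleGraph α} {B : SimpleGraph β}
    (hA : A.Connected) (hB : B.Connected) (f : A →g G) (g : B →g G) {a : α} {b : β}
    (hab : f a = g b) {k : ℕ} (hcover : ∀ z, z ∈ Set.range f ∨ ∃ y, g y = z ∧ B.dist b y ≤ k)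
    (x : α) : ecc G (f x) ≤ max (ecc A x) (A.dist x a + k) := by
  refine ecc_le_of_forall_dist_le fun z => ?_
  rcases hcover z with ⟨y, rfl⟩ | ⟨y, rfl, hy⟩
  · exact ((hA.preconnected x y).dist_map_le f).trans ((dist_le_ecc x y).trans (le_max_left _ _))
  · calc G.dist (f x) (g y) ≤ G.dist (f x) (f a) + G.dist (g b) (g y) := by
          rw [hab]; exact ((hB.preconnected b y).map g).dist_triangle_right _
      _ ≤ A.dist x a + k :=
          add_le_add ((hA.preconnected x a).dist_map_le f)
            (((hB.preconnected b y).dist_map_le g).trans hy)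
      _ ≤ _ := le_max_right _ _

end Eccentricity

theorem Fintype.sum_le_sum_of_injective {α β : Type*} [Fintype α] [Fintype β] {φ : α → β}
    (hφ : Function.Injective φ) {f : α → ℕ} {g : β → ℕ} (h : ∀ x, f x ≤ g (φ x)) :
    ∑ x, f x ≤ ∑ y, g y := by
  classical
  calc ∑ x, f x ≤ ∑ x, g (φ x) := Finset.sum_le_sum fun x _ => h x
    _ = ∑ y ∈ Finset.univ.map ⟨φ, hφ⟩, g y := (Finset.sum_map Finset.univ ⟨φ, hφ⟩ g).symm
    _ ≤ ∑ y, g y := Finset.sum_le_sum_of_subset (Finset.subset_univ _)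

/-- The distance between the positions `a, b ∈ [0, m]` on the cycle `C_m` whose vertices are
numbered `0, …, m - 1` (position `m` is position `0` again); `a - b + (b - a)` is `|a - b|`. -/
def cycleDist (m a b : ℕ) : ℕ := min (a - b + (b - a)) (m - (a - b + (b - a)))

theorem cycleDist_self (m a : ℕ) : cycleDist m a a = 0 := by
  simp [cycleDist]

section GlueOneCycle

variable {V : Type*} {H : SimpleGraph V} {w : V} {M : ℕ}

/- A vertex `x` of `glueOneCycle H w M` lies at position `cyclePos x` of the cycle, `w` being
position `0`, and above the vertex `baseVertex w x` of `H`. -/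
def cyclePos {n : ℕ} : V ⊕ Fin n → ℕ := Sum.elim (fun _ => 0) fun i => i + 1

def baseVertex {α : Type*} (w : V) : V ⊕ α → V := Sum.elim id fun _ => w

def cycleVertex (w : V) (M p : ℕ) : V ⊕ Fin (M - 1) :=
  if h : 0 < p ∧ p < M then .inr ⟨p - 1, by omega⟩ else .inl w

theorem cycleVertex_of_not_pos_lt {p : ℕ} (h : ¬ (0 < p ∧ p < M)) :
    cycleVertex w M p = .inl w := dif_neg h

theorem cycleVertex_succ (i : Fin (M - 1)) : cycleVertex w M (i + 1) = .inr i := by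
  rw [cycleVertex, dif_pos (by omega)]
  rfl

theorem cyclePos_cycleVertex {p : ℕ} (hp : p < M) : cyclePos (cycleVertex w M p) = p := by
  unfold cycleVertex
  split_ifs <;> simp [cyclePos] <;> omega

theorem baseVertex_cycleVertex (p : ℕ) : baseVertex w (cycleVertex w M p) = w := by
  unfold cycleVertex
  split_ifs <;> rfl

theorem cyclePos_lt (hM : 2 ≤ M) (x : V ⊕ Fin (M - 1)) : cyclePos x < M := by
  rcases x with _ | i
  · simp only [cyclePos, Sum.elim_inl]; omega
  · simp only [cyclePos, Sum.elim_inr]; omega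

theorem glueOneCycle_adj_cycleVertex_succ (hM : 2 ≤ M) {p : ℕ} (hp : p < M) :
    (glueOneCycle H w M).Adj (cycleVertex w M p) (cycleVertex w M (p + 1)) := by
  unfold cycleVertex
  split_ifs <;> simp [glueOneCycle] <;> omega

def glueOneCycleBase (H : SimpleGraph V) (w : V) (M : ℕ) : H →g glueOneCycle H w M where
  toFun := .inl
  map_rel' h := by simp [glueOneCycle, h, h.ne]

theorem glueOneCycle_dist_cycleVertex_le (hM : 2 ≤ M) {a b : ℕ} (ha : a ≤ M) (hb : b ≤ M) :
    (glueOneCycle H w M).dist (cycleVertex w M a) (cycleVertex w M b) ≤ cycleDist M a b := by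
  wlog hab : a ≤ b generalizing a b
  · rw [dist_comm, show cycleDist M a b = cycleDist M b a by unfold cycleDist; omega]
    exact this hb ha (by omega)
  have hadj : ∀ k < M,
      (glueOneCycle H w M).Adj (cycleVertex w M k) (cycleVertex w M (k + 1)) :=
    fun k hk => glueOneCycle_adj_cycleVertex_succ hM hk
  obtain ⟨p, hp⟩ := exists_walk_length_eq_of_adj_succ _ hab fun k _ hk => hadj k (by omega)
  obtain ⟨q, hq⟩ := exists_walk_length_eq_of_adj_succ _ (Nat.zero_le a)
    fun k _ hk => hadj k (by omega)
  obtain ⟨r, hr⟩ := exists_walk_length_eq_of_adj_succ _ hb fun k _ hk => hadj k hk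
  have hwrap : cycleVertex w M M = cycleVertex w M 0 := by
    rw [cycleVertex_of_not_pos_lt (by omega), cycleVertex_of_not_pos_lt (by omega)]
  have hdirect := dist_le p
  have haround := dist_le (q.reverse.append (r.reverse.copy hwrap rfl))
  simp only [Walk.length_reverse, Walk.length_append, Walk.length_copy] at haround
  unfold cycleDist
  omega

theorem glueOneCycle_connected (hH : H.Connected) (hM : 2 ≤ M) :
    (glueOneCycle H w M).Connected := by
  have hreach : ∀ x, (glueOneCycle H w M).Reachable (.inl w) x := by
    rintro (u | i)
    · exact (hH.preconnected w u).map (glueOneCycleBase H w M)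
    · obtain ⟨p, -⟩ := exists_walk_length_eq_of_adj_succ (cycleVertex w M) (Nat.zero_le (i + 1))
        fun k _ hk => glueOneCycle_adj_cycleVertex_succ (H := H) hM (by omega)
      have h : (glueOneCycle H w M).Reachable _ _ := ⟨p⟩
      rwa [cycleVertex_of_not_pos_lt (by omega), cycleVertex_succ] at h
  have : Nonempty (V ⊕ Fin (M - 1)) := ⟨.inl w⟩
  exact .mk fun x y => (hreach x).symm.trans (hreach y)

theorem glueOneCycle_dist_le (hH : H.Connected) (hM : 2 ≤ M) (x y : V ⊕ Fin (M - 1)) :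
    (glueOneCycle H w M).dist x y ≤
      cycleDist M (cyclePos x) (cyclePos y) + H.dist (baseVertex w x) (baseVertex w y) := by
  have hO := glueOneCycle_connected (w := w) hH hM
  have hproj : ∀ z, (glueOneCycle H w M).dist z (cycleVertex w M (cyclePos z)) ≤
      H.dist (baseVertex w z) w := by
    rintro (u | i)
    · rw [cyclePos, Sum.elim_inl, cycleVertex_of_not_pos_lt (by omega)]
      exact (hH.preconnected u w).dist_map_le (glueOneCycleBase H w M)
    · simp [cyclePos, cycleVertex_succ]
  have hvia : (glueOneCycle H w M).dist x y ≤ H.dist (baseVertex w x) w +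
      cycleDist M (cyclePos x) (cyclePos y) + H.dist w (baseVertex w y) := by
    have hx := hproj x
    have hy := hproj y
    have hcycle := glueOneCycle_dist_cycleVertex_le (H := H) (w := w) hM
      (cyclePos_lt hM x).le (cyclePos_lt hM y).le
    have h₁ := hO.dist_triangle (u := x) (v := cycleVertex w M (cyclePos x)) (w := y)
    have h₂ := hO.dist_triangle (u := cycleVertex w M (cyclePos x))
      (v := cycleVertex w M (cyclePos y)) (w := y)
    rw [dist_comm (u := cycleVertex w M (cyclePos y))] at h₂
    rw [H.dist_comm (u := w)]
    omega
  rcases x with u | i <;> rcases y with v | j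
  · refine le_of_le_of_eq ((hH.preconnected u v).dist_map_le (glueOneCycleBase H w M)) ?_
    simp [cyclePos, baseVertex, cycleDist]
  all_goals
    simp only [baseVertex, Sum.elim_inl, Sum.elim_inr, id, SimpleGraph.dist_self] at hvia ⊢
    omega

theorem glueOneCycle_le_dist (hH : H.Connected) (hM : 2 ≤ M) (x y : V ⊕ Fin (M - 1)) :
    cycleDist M (cyclePos x) (cyclePos y) + H.dist (baseVertex w x) (baseVertex w y) ≤
      (glueOneCycle H w M).dist x y := by
  have h := ((glueOneCycle_connected (w := w) hH hM).preconnected x y).le_add_dist_of_lipschitz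
    (fun z => cycleDist M (cyclePos x) (cyclePos z) + H.dist (baseVertex w x) (baseVertex w z)) ?_
  · simpa [cycleDist] using h
  have hc := cyclePos_lt hM x
  generalize cyclePos x = c at hc ⊢
  generalize baseVertex w x = b
  rintro (u | i) (v | j) hab <;>
    simp only [glueOneCycle, fromRel_adj, or_false, false_or] at hab <;>
    simp only [cyclePos, baseVertex, Sum.elim_inl, Sum.elim_inr, id]
  · rcases hab.2 with h | h
    · have := h.diff_dist_adj (u := b)
      omega
    · have := h.symm.diff_dist_adj (u := b)
      omega
  · obtain ⟨-, rfl, hj⟩ := hab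
    have := j.isLt
    unfold cycleDist
    omega
  · obtain ⟨-, rfl, hi⟩ := hab
    have := i.isLt
    unfold cycleDist
    omega
  · have := i.isLt
    have := j.isLt
    unfold cycleDist
    omega

theorem glueOneCycle_dist (hH : H.Connected) (hM : 2 ≤ M) (x y : V ⊕ Fin (M - 1)) :
    (glueOneCycle H w M).dist x y =
      cycleDist M (cyclePos x) (cyclePos y) + H.dist (baseVertex w x) (baseVertex w y) :=
  (glueOneCycle_dist_le hH hM x y).antisymm (glueOneCycle_le_dist hH hM x y)

theorem ecc_glueOneCycle [Finite V] (hH : H.Connected) (hM : 2 ≤ M) (x : V ⊕ Fin (M - 1)) :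
    ecc (glueOneCycle H w M) x = max (M / 2 + H.dist (baseVertex w x) w)
      (cycleDist M (cyclePos x) 0 + ecc H (baseVertex w x)) := by
  have hc := cyclePos_lt hM x
  apply le_antisymm
  · refine ecc_le_of_forall_dist_le fun y => ?_
    rw [glueOneCycle_dist hH hM]
    rcases y with v | j
    · exact le_max_of_le_right (Nat.add_le_add_left (dist_le_ecc _ v) _)
    · refine le_max_of_le_left (Nat.add_le_add ?_ le_rfl)
      unfold cycleDist
      omega
  · apply max_le
    · obtain ⟨p, hp, hcp⟩ : ∃ p < M, cycleDist M (cyclePos x) p = M / 2 := by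
        by_cases h : cyclePos x + M / 2 < M
        · exact ⟨_, h, by unfold cycleDist; omega⟩
        · exact ⟨cyclePos x + M / 2 - M, by omega, by unfold cycleDist; omega⟩
      have := dist_le_ecc (G := glueOneCycle H w M) x (cycleVertex w M p)
      rwa [glueOneCycle_dist hH hM, cyclePos_cycleVertex hp, baseVertex_cycleVertex, hcp] at this
    · obtain ⟨u, hu⟩ := exists_dist_eq_ecc (G := H) (baseVertex w x)
      have := dist_le_ecc (G := glueOneCycle H w M) x (.inl u)
      rw [glueOneCycle_dist hH hM] at this
      rw [← hu]
      exact this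

end GlueOneCycle

section Wedge

variable {V γ : Type*} [Finite V] {H : SimpleGraph V} {w : V} {m m' M : ℕ} {G : SimpleGraph γ}
  {f : glueOneCycle H w m →g G} {g : glueOneCycle H w m' →g G}

theorem ecc_wedge_inl_le (hH : H.Connected) (hm : 2 ≤ m) (hm' : 2 ≤ m')
    (hmM : m / 2 ≤ M / 2) (hm'M : m' / 2 ≤ M / 2)
    (hcover : ∀ z, z ∈ Set.range f ∨ ∃ j, g (.inr j) = z) (hfg : f (.inl w) = g (.inl w))
    (v : V) : ecc G (f (.inl v)) ≤ ecc (glueOneCycle H w M) (.inl v) := by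
  have hcover' : ∀ z, z ∈ Set.range f ∨
      ∃ y, g y = z ∧ (glueOneCycle H w m').dist (.inl w) y ≤ m' / 2 := by
    refine fun z => (hcover z).imp_right fun ⟨j, hj⟩ => ⟨.inr j, hj, ?_⟩
    rw [glueOneCycle_dist hH hm']
    simp only [cyclePos, baseVertex, Sum.elim_inl, Sum.elim_inr, id, SimpleGraph.dist_self,
      cycleDist]
    omega
  have h := ecc_map_le_of_cover (glueOneCycle_connected hH hm) (glueOneCycle_connected hH hm')
    f g hfg hcover' (.inl v)
  rw [ecc_glueOneCycle hH hm, glueOneCycle_dist hH hm] at h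
  rw [ecc_glueOneCycle hH (by omega)]
  simp only [cyclePos, baseVertex, Sum.elim_inl, id, cycleDist_self] at h ⊢
  omega

theorem ecc_wedge_inr_le (hH : H.Connected) (hm : 2 ≤ m) (hm' : 2 ≤ m')
    (hmM : m / 2 ≤ M / 2) (hw : 1 ≤ ecc H w)
    (hcover : ∀ z, z ∈ Set.range f ∨ ∃ j, g (.inr j) = z) (hfg : f (.inl w) = g (.inl w))
    (i : Fin (m - 1)) (q : Fin (M - 1))
    (hdepth : cycleDist m (i + 1) 0 ≤ cycleDist M (q + 1) 0)
    (hfar : cycleDist m (i + 1) 0 + m' / 2 ≤ max (M / 2) (cycleDist M (q + 1) 0 + 1)) :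
    ecc G (f (.inr i)) ≤ ecc (glueOneCycle H w M) (.inr q) := by
  have hcover' : ∀ z, z ∈ Set.range f ∨ ∃ y, g y = z ∧
      (glueOneCycle H w m').dist (.inl w) y ≤ ecc (glueOneCycle H w m') (.inl w) :=
    fun z => (hcover z).imp_right fun ⟨j, hj⟩ => ⟨.inr j, hj, dist_le_ecc _ _⟩
  have h := ecc_map_le_of_cover (glueOneCycle_connected hH hm) (glueOneCycle_connected hH hm')
    f g hfg hcover' (.inr i)
  rw [ecc_glueOneCycle hH hm, ecc_glueOneCycle hH hm', glueOneCycle_dist hH hm] at h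
  rw [ecc_glueOneCycle hH (by omega)]
  simp only [cyclePos, baseVertex, Sum.elim_inl, Sum.elim_inr, id, SimpleGraph.dist_self,
    cycleDist_self] at h ⊢
  omega

end Wedge

section Splice

/- Read from `w`, the long cycle `C_{m1+m2-1}` passes through the first half of `C_{m1}`, the
first half of `C_{m2}` (up to its antipode), the antipode of `C_{m1}`, the second half of
`C_{m2}` and the second half of `C_{m1}`. -/
def spliceLeft (m1 m2 i : ℕ) : ℕ :=
  if 2 * (i + 1) < m1 then i else if 2 * (i + 1) = m1 then i + m2 / 2 else i + m2 - 1

def spliceRight (m1 m2 j : ℕ) : ℕ :=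
  if 2 * (j + 1) ≤ m2 then (m1 - 1) / 2 + j else m1 / 2 + j

variable {m1 m2 : ℕ}

def spliceCycles (h1 : 0 < m1) (h2 : 0 < m2) :
    Fin (m1 - 1) ⊕ Fin (m2 - 1) → Fin (m1 + m2 - 1 - 1) :=
  Sum.elim (fun i => ⟨spliceLeft m1 m2 i, by unfold spliceLeft; split_ifs <;> omega⟩)
    (fun j => ⟨spliceRight m1 m2 j, by unfold spliceRight; split_ifs <;> omega⟩)

theorem spliceCycles_injective (h1 : 0 < m1) (h2 : 0 < m2) :
    Function.Injective (spliceCycles h1 h2) := by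
  rintro (i | j) (i' | j') h <;>
    simp only [spliceCycles, Sum.elim_inl, Sum.elim_inr, spliceLeft, spliceRight,
      Sum.inl.injEq, Sum.inr.injEq, reduceCtorEq, Fin.ext_iff] at h ⊢ <;>
    split_ifs at h <;> omega

theorem spliceLeft_depth (h2 : 0 < m2) {i : ℕ} (hi : i < m1 - 1) :
    cycleDist m1 (i + 1) 0 ≤ cycleDist (m1 + m2 - 1) (spliceLeft m1 m2 i + 1) 0 ∧
      cycleDist m1 (i + 1) 0 + m2 / 2 ≤
        max ((m1 + m2 - 1) / 2) (cycleDist (m1 + m2 - 1) (spliceLeft m1 m2 i + 1) 0 + 1) := by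
  unfold cycleDist spliceLeft
  split_ifs <;> omega

theorem spliceRight_depth (h1 : 0 < m1) {j : ℕ} (hj : j < m2 - 1) :
    cycleDist m2 (j + 1) 0 ≤ cycleDist (m1 + m2 - 1) (spliceRight m1 m2 j + 1) 0 ∧
      cycleDist m2 (j + 1) 0 + m1 / 2 ≤
        max ((m1 + m2 - 1) / 2) (cycleDist (m1 + m2 - 1) (spliceRight m1 m2 j + 1) 0 + 1) := by
  unfold cycleDist spliceRight
  split_ifs <;> omega

end Splice

section GlueTwoCycles

variable {V : Type*} (H : SimpleGraph V) (w : V) (m1 m2 : ℕ)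

def glueTwoCyclesLeft : glueOneCycle H w m1 →g glueTwoCycles H w m1 m2 where
  toFun := Sum.map id .inl
  map_rel' := by
    rintro (x | i) (y | j) h <;> simpa [glueOneCycle, glueTwoCycles] using h

def glueTwoCyclesRight : glueOneCycle H w m2 →g glueTwoCycles H w m1 m2 where
  toFun := Sum.map id .inr
  map_rel' := by
    rintro (x | i) (y | j) h <;> simpa [glueOneCycle, glueTwoCycles] using h

theorem glueTwoCyclesLeft_cover (z : V ⊕ (Fin (m1 - 1) ⊕ Fin (m2 - 1))) :
    z ∈ Set.range (glueTwoCyclesLeft H w m1 m2) ∨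
      ∃ j, glueTwoCyclesRight H w m1 m2 (.inr j) = z := by
  rcases z with v | i | j
  · exact .inl ⟨.inl v, rfl⟩
  · exact .inl ⟨.inr i, rfl⟩
  · exact .inr ⟨j, rfl⟩

theorem glueTwoCyclesRight_cover (z : V ⊕ (Fin (m1 - 1) ⊕ Fin (m2 - 1))) :
    z ∈ Set.range (glueTwoCyclesRight H w m1 m2) ∨
      ∃ i, glueTwoCyclesLeft H w m1 m2 (.inr i) = z := by
  rcases z with v | i | j
  · exact .inl ⟨.inl v, rfl⟩
  · exact .inr ⟨i, rfl⟩
  · exact .inl ⟨.inr j, rfl⟩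

end GlueTwoCycles

theorem stmt16 {V : Type*} [Fintype V] (H : SimpleGraph V) (hH : H.Connected)
    (hV : 2 ≤ Fintype.card V) (w : V) (m1 m2 : ℕ) (h1 : 3 ≤ m1) (h2 : 3 ≤ m2) :
    totalEcc (glueTwoCycles H w m1 m2) ≤ totalEcc (glueOneCycle H w (m1 + m2 - 1)) := by
  have : Nontrivial V := Fintype.one_lt_card_iff_nontrivial.mp hV
  have hw := one_le_ecc hH w
  refine Fintype.sum_le_sum_of_injective
    (Function.injective_id.sumMap (spliceCycles_injective (by omega) (by omega))) ?_
  rintro (v | i | j)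
  · refine ecc_wedge_inl_le hH ?_ ?_ ?_ ?_ (glueTwoCyclesLeft_cover H w m1 m2) rfl v <;> omega
  · obtain ⟨hdepth, hfar⟩ := spliceLeft_depth (m2 := m2) (by omega) i.isLt
    refine ecc_wedge_inr_le hH ?_ ?_ ?_ hw (glueTwoCyclesLeft_cover H w m1 m2) rfl i _ hdepth
      hfar <;> omega
  · obtain ⟨hdepth, hfar⟩ := spliceRight_depth (m1 := m1) (by omega) j.isLt
    refine ecc_wedge_inr_le hH ?_ ?_ ?_ hw (glueTwoCyclesRight_cover H w m1 m2) rfl j _ hdepth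
      hfar <;> omega
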